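/- arXiv:quant-ph/0206171 — 6 statements merged into one kernel-verified Lean document; each statement's English description precedes it below -/
import Mathlib

section
/- Let Γ be a real symmetric positive definite 2n×2n matrix with eigenvalues λ_1 ≤ λ_2 ≤ … ≤ λ_{2n}. Then for any real unit vectors ξ, ξ' satisfying ⟨ξ, Γ^{1/2} ξ'⟩ = 0, one has ⟨ξ, Γ ξ⟩ · ⟨ξ', Γ ξ'⟩ ≥ λ_1 λ_2. -/
/-!
Put `u = Γ^{1/2} ξ'`, so that `ξ ⊥ u`, `⟨ξ', Γ ξ'⟩ = |u|²` and `⟨u, Γ⁻¹ u⟩ = |ξ'|² = 1`.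
Let `v₁` be the bottom eigenvector and `μ = max λ₁ λ₂`, so that `μ |x|² ≤ ⟨x, Γ x⟩` on `v₁⊥`,
hence `μ ⟨x, Γ⁻¹ x⟩ ≤ |x|²` there. Splitting `ξ` and `u` along `v₁`, with `α = ⟨ξ, v₁⟩` and
`β = ⟨u, v₁⟩`,
  `⟨ξ, Γ ξ⟩ ≥ λ₁ α² + μ (1 - α²)`  and  `λ₁ μ ⟨u, Γ⁻¹ u⟩ ≤ μ β² + λ₁ (|u|² - β²)`,
and Bessel's inequality for `ξ ⊥ u` gives `β² ≤ |u|² (1 - α²)`. The difference between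
`⟨ξ, Γ ξ⟩ |u|²` and `λ₁ μ ⟨u, Γ⁻¹ u⟩` is then at least `(μ - λ₁) (|u|² (1 - α²) - β²) ≥ 0`.
-/

open Matrix

section OldSqrt

open scoped ComplexOrder

/-- The old Mathlib `Matrix.PosSemidef.sqrt` (removed upstream), restated verbatim. -/
noncomputable def Matrix.PosSemidef.sqrt {𝕜 : Type*} [RCLike 𝕜] {n : Type*} [Fintype n]
    [DecidableEq n] {A : Matrix n n 𝕜} (hA : A.PosSemidef) : Matrix n n 𝕜 :=
  hA.1.eigenvectorUnitary.1 * diagonal ((↑) ∘ (√·) ∘ hA.1.eigenvalues) *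
  (star hA.1.eigenvectorUnitary : Matrix n n 𝕜)

end OldSqrt

namespace Matrix

section Sqrt

open scoped ComplexOrder MatrixOrder

variable {𝕜 n : Type*} [RCLike 𝕜] [Fintype n] [DecidableEq n] {A : Matrix n n 𝕜}

lemma PosSemidef.sqrt_eq_cfcSqrt (hA : A.PosSemidef) : hA.sqrt = CFC.sqrt A := by
  rw [CFC.sqrt_eq_real_sqrt A hA.nonneg, cfcₙ_eq_cfc, hA.1.cfc_eq]
  rfl

lemma PosSemidef.sqrt_mul_self (hA : A.PosSemidef) : hA.sqrt * hA.sqrt = A := by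
  rw [hA.sqrt_eq_cfcSqrt]
  exact CFC.sqrt_mul_sqrt_self A hA.nonneg

lemma PosSemidef.posSemidef_sqrt (hA : A.PosSemidef) : hA.sqrt.PosSemidef := by
  rw [hA.sqrt_eq_cfcSqrt]
  exact (CFC.sqrt_nonneg A).posSemidef

end Sqrt

section RealQuadraticForm

variable {m : Type*} [Fintype m]

lemma dotProduct_self_nonneg (x : m → ℝ) : 0 ≤ x ⬝ᵥ x :=
  Finset.sum_nonneg fun i _ => mul_self_nonneg (x i)

lemma dotProduct_sq_le_mul (x y : m → ℝ) : (x ⬝ᵥ y) ^ 2 ≤ (x ⬝ᵥ x) * (y ⬝ᵥ y) := by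
  simpa [dotProduct, sq] using Finset.sum_mul_sq_le_sq_mul_sq Finset.univ x y

lemma IsSymm.dotProduct_mulVec_comm {A : Matrix m m ℝ} (hA : A.IsSymm) (x y : m → ℝ) :
    x ⬝ᵥ A *ᵥ y = A *ᵥ x ⬝ᵥ y := by
  rw [dotProduct_mulVec, ← mulVec_transpose, hA]

lemma IsSymm.mulVec_dotProduct_mulVec_self {S : Matrix m m ℝ} (hS : S.IsSymm) (x : m → ℝ) :
    S *ᵥ x ⬝ᵥ S *ᵥ x = x ⬝ᵥ (S * S) *ᵥ x := by
  rw [← hS.dotProduct_mulVec_comm, mulVec_mulVec]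

lemma sub_smul_dotProduct_of_unit {v : m → ℝ} (hv : v ⬝ᵥ v = 1) (x : m → ℝ) :
    (x - (x ⬝ᵥ v) • v) ⬝ᵥ v = 0 := by
  simp [sub_dotProduct, hv]

lemma sub_smul_dotProduct_self_of_unit {v : m → ℝ} (hv : v ⬝ᵥ v = 1) (x : m → ℝ) :
    (x - (x ⬝ᵥ v) • v) ⬝ᵥ (x - (x ⬝ᵥ v) • v) = x ⬝ᵥ x - (x ⬝ᵥ v) ^ 2 := by
  simp only [sub_dotProduct, dotProduct_sub, dotProduct_smul, smul_dotProduct, smul_eq_mul, hv,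
    dotProduct_comm v x]
  ring

lemma sq_dotProduct_le_of_orthogonal {ξ u v : m → ℝ} (hξ : ξ ⬝ᵥ ξ = 1) (hv : v ⬝ᵥ v = 1)
    (hξu : ξ ⬝ᵥ u = 0) : (u ⬝ᵥ v) ^ 2 ≤ (u ⬝ᵥ u) * (1 - (ξ ⬝ᵥ v) ^ 2) := by
  set w := v - (v ⬝ᵥ ξ) • ξ
  have huw : u ⬝ᵥ w = u ⬝ᵥ v := by
    simp [w, dotProduct_sub, dotProduct_comm u ξ, hξu]
  have hww : w ⬝ᵥ w = 1 - (ξ ⬝ᵥ v) ^ 2 := by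
    rw [sub_smul_dotProduct_self_of_unit hξ, hv, dotProduct_comm]
  simpa [huw, hww] using dotProduct_sq_le_mul u w

lemma IsSymm.dotProduct_mulVec_eq_of_eigenvector {A : Matrix m m ℝ} (hA : A.IsSymm)
    {v : m → ℝ} (hv : v ⬝ᵥ v = 1) (x : m → ℝ) {c : ℝ} (hAv : A *ᵥ v = c • v) :
    x ⬝ᵥ A *ᵥ x = c * (x ⬝ᵥ v) ^ 2 + (x - (x ⬝ᵥ v) • v) ⬝ᵥ A *ᵥ (x - (x ⬝ᵥ v) • v) := by
  set a := x ⬝ᵥ v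
  set p := x - a • v
  have hx : x = p + a • v := (sub_add_cancel _ _).symm
  have hpv : p ⬝ᵥ v = 0 := sub_smul_dotProduct_of_unit hv x
  have hvAp : v ⬝ᵥ A *ᵥ p = 0 := by
    rw [hA.dotProduct_mulVec_comm, hAv, smul_dotProduct, dotProduct_comm, hpv, smul_zero]
  rw [hx]
  simp only [mulVec_add, mulVec_smul, hAv, add_dotProduct, dotProduct_add, smul_dotProduct,
    dotProduct_smul, hpv, hvAp, hv, smul_eq_mul]
  ring

lemma mul_dotProduct_self_le_of_forall_unit {A : Matrix m m ℝ} {v : m → ℝ} {c : ℝ}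
    (h : ∀ x : m → ℝ, x ⬝ᵥ x = 1 → x ⬝ᵥ v = 0 → c ≤ x ⬝ᵥ A *ᵥ x) {x : m → ℝ}
    (hx : x ⬝ᵥ v = 0) : c * (x ⬝ᵥ x) ≤ x ⬝ᵥ A *ᵥ x := by
  rcases eq_or_ne x 0 with rfl | hx0
  · simp
  have hpos : 0 < x ⬝ᵥ x :=
    (dotProduct_self_nonneg x).lt_of_ne' (mt dotProduct_self_eq_zero.mp hx0)
  set r := √(x ⬝ᵥ x)
  have hr : r * r = x ⬝ᵥ x := Real.mul_self_sqrt hpos.le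
  have hr0 : r ≠ 0 := (Real.sqrt_pos.mpr hpos).ne'
  have hunit := h (r⁻¹ • x) (by simp [← hr, hr0]) (by simp [hx])
  simp only [mulVec_smul, dotProduct_smul, smul_dotProduct, smul_eq_mul] at hunit
  rw [← hr]
  calc c * (r * r) ≤ r⁻¹ * (r⁻¹ * (x ⬝ᵥ A *ᵥ x)) * (r * r) := by gcongr
    _ = x ⬝ᵥ A *ᵥ x := by field_simp

/-- By Cauchy–Schwarz, `⟨z, A z⟩² ≤ |z|² |A z|² ≤ ⟨z, A z⟩ |A z|² / μ`. -/
lemma mul_dotProduct_mulVec_le_of_mul_dotProduct_self_le {A : Matrix m m ℝ} {μ : ℝ}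
    (hμ : 0 ≤ μ) {z : m → ℝ} (h : μ * (z ⬝ᵥ z) ≤ z ⬝ᵥ A *ᵥ z) :
    μ * (z ⬝ᵥ A *ᵥ z) ≤ A *ᵥ z ⬝ᵥ A *ᵥ z := by
  rcases (dotProduct_self_nonneg z).eq_or_lt with hz0 | hzpos
  · simp [dotProduct_self_eq_zero.mp hz0.symm]
  have hCS := dotProduct_sq_le_mul z (A *ᵥ z)
  nlinarith [mul_nonneg hμ hzpos.le]

variable [DecidableEq m]

lemma IsSymm.mulVec_dotProduct_inv_mul_self_mulVec {S : Matrix m m ℝ} (hS : S.IsSymm)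
    (hdet : IsUnit (S * S).det) (x : m → ℝ) :
    S *ᵥ x ⬝ᵥ (S * S)⁻¹ *ᵥ S *ᵥ x = x ⬝ᵥ x := by
  have hSdet : IsUnit S.det := isUnit_of_mul_isUnit_left (det_mul S S ▸ hdet)
  rw [← hS.dotProduct_mulVec_comm, mulVec_mulVec, mulVec_mulVec, mul_inv_rev,
    ← mul_assoc S, mul_nonsing_inv S hSdet, one_mul, nonsing_inv_mul S hSdet, one_mulVec]

lemma inv_mulVec_eq_of_mulVec_eq_smul {A : Matrix m m ℝ} (hdet : IsUnit A.det) {v : m → ℝ}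
    {c : ℝ} (hc : c ≠ 0) (hAv : A *ᵥ v = c • v) : A⁻¹ *ᵥ v = c⁻¹ • v := by
  rw [eq_inv_smul_iff₀ hc, ← mulVec_smul, ← hAv, mulVec_mulVec, nonsing_inv_mul A hdet,
    one_mulVec]

variable {A : Matrix m m ℝ} {v : m → ℝ} {c μ : ℝ}

lemma IsSymm.mul_dotProduct_inv_mulVec_le (hA : A.IsSymm) (hdet : IsUnit A.det) (hc : c ≠ 0)
    (hAv : A *ᵥ v = c • v) (hμ0 : 0 ≤ μ) (hμ : ∀ x, x ⬝ᵥ v = 0 → μ * (x ⬝ᵥ x) ≤ x ⬝ᵥ A *ᵥ x)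
    {p : m → ℝ} (hp : p ⬝ᵥ v = 0) : μ * (p ⬝ᵥ A⁻¹ *ᵥ p) ≤ p ⬝ᵥ p := by
  set z := A⁻¹ *ᵥ p
  have hAz : A *ᵥ z = p := by rw [mulVec_mulVec, mul_nonsing_inv A hdet, one_mulVec]
  have hzv : z ⬝ᵥ v = 0 := by
    rw [← hA.inv.dotProduct_mulVec_comm, inv_mulVec_eq_of_mulVec_eq_smul hdet hc hAv,
      dotProduct_smul, hp, smul_zero]
  have := mul_dotProduct_mulVec_le_of_mul_dotProduct_self_le hμ0 (hμ z hzv)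
  rwa [hAz, dotProduct_comm] at this

theorem IsSymm.mul_mul_dotProduct_inv_mulVec_le_of_orthogonal (hA : A.IsSymm)
    (hdet : IsUnit A.det) (hv : v ⬝ᵥ v = 1) (hAv : A *ᵥ v = c • v) (hc : 0 < c) (hcμ : c ≤ μ)
    (hμ : ∀ x, x ⬝ᵥ v = 0 → μ * (x ⬝ᵥ x) ≤ x ⬝ᵥ A *ᵥ x) {ξ u : m → ℝ} (hξ : ξ ⬝ᵥ ξ = 1)
    (hξu : ξ ⬝ᵥ u = 0) : c * μ * (u ⬝ᵥ A⁻¹ *ᵥ u) ≤ (ξ ⬝ᵥ A *ᵥ ξ) * (u ⬝ᵥ u) := by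
  have hξ_lower : c * (ξ ⬝ᵥ v) ^ 2 + μ * (1 - (ξ ⬝ᵥ v) ^ 2) ≤ ξ ⬝ᵥ A *ᵥ ξ := by
    have := hμ _ (sub_smul_dotProduct_of_unit hv ξ)
    rw [sub_smul_dotProduct_self_of_unit hv, hξ] at this
    rw [hA.dotProduct_mulVec_eq_of_eigenvector hv ξ hAv]
    linarith
  have hu_upper :
      c * μ * (u ⬝ᵥ A⁻¹ *ᵥ u) ≤ μ * (u ⬝ᵥ v) ^ 2 + c * (u ⬝ᵥ u - (u ⬝ᵥ v) ^ 2) := by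
    have := hA.mul_dotProduct_inv_mulVec_le hdet hc.ne' hAv (hc.le.trans hcμ) hμ
      (sub_smul_dotProduct_of_unit hv u)
    rw [sub_smul_dotProduct_self_of_unit hv] at this
    rw [hA.inv.dotProduct_mulVec_eq_of_eigenvector hv u
      (inv_mulVec_eq_of_mulVec_eq_smul hdet hc.ne' hAv), mul_add, ← mul_assoc,
      mul_assoc c, mul_comm μ, ← mul_assoc, mul_inv_cancel₀ hc.ne', one_mul]
    nlinarith
  have hbessel := sq_dotProduct_le_of_orthogonal hξ hv hξu
  nlinarith [mul_le_mul_of_nonneg_right hξ_lower (dotProduct_self_nonneg u),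
    mul_nonneg (sub_nonneg.2 hcμ) (sub_nonneg.2 hbessel)]

end RealQuadraticForm

end Matrix

theorem quadratic_form_product_lower_bound_general (n : ℕ)
    (Γ : Matrix (Fin (2 * n)) (Fin (2 * n)) ℝ)
    (hΓ : Γ.IsSymm) (hΓpd : Γ.PosDef)
    (lam1 lam2 : ℝ) (v1 : Fin (2 * n) → ℝ)
    (hv1 : v1 ⬝ᵥ v1 = 1)
    (hev1 : Γ.mulVec v1 = lam1 • v1)
    (hmin1 : ∀ x : Fin (2 * n) → ℝ, x ⬝ᵥ x = 1 → lam1 ≤ x ⬝ᵥ Γ.mulVec x)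
    (hmin2 : ∀ x : Fin (2 * n) → ℝ, x ⬝ᵥ x = 1 → x ⬝ᵥ v1 = 0 → lam2 ≤ x ⬝ᵥ Γ.mulVec x)
    (ξ ξ' : Fin (2 * n) → ℝ) (hξ : ξ ⬝ᵥ ξ = 1) (hξ' : ξ' ⬝ᵥ ξ' = 1)
    (horth : ξ ⬝ᵥ (hΓpd.posSemidef.sqrt).mulVec ξ' = 0) :
    lam1 * lam2 ≤ (ξ ⬝ᵥ Γ.mulVec ξ) * (ξ' ⬝ᵥ Γ.mulVec ξ') := by
  set S := hΓpd.posSemidef.sqrt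
  have hS : S * S = Γ := hΓpd.posSemidef.sqrt_mul_self
  have hSsymm : S.IsSymm := isHermitian_iff_isSymm.mp hΓpd.posSemidef.posSemidef_sqrt.1
  have hdet : IsUnit Γ.det := hΓpd.det_pos.ne'.isUnit
  have hlam1 : 0 < lam1 := by
    have hv1ne : v1 ≠ 0 := by rintro rfl; simp at hv1
    simpa [hev1, hv1] using hΓpd.dotProduct_mulVec_pos hv1ne
  have hμ : ∀ x, x ⬝ᵥ v1 = 0 → max lam1 lam2 * (x ⬝ᵥ x) ≤ x ⬝ᵥ Γ *ᵥ x := fun _ =>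
    mul_dotProduct_self_le_of_forall_unit fun y hy hyv => max_le (hmin1 y hy) (hmin2 y hy hyv)
  have hnorm : S *ᵥ ξ' ⬝ᵥ S *ᵥ ξ' = ξ' ⬝ᵥ Γ *ᵥ ξ' := by
    rw [hSsymm.mulVec_dotProduct_mulVec_self, hS]
  have hinv : S *ᵥ ξ' ⬝ᵥ Γ⁻¹ *ᵥ S *ᵥ ξ' = 1 := by
    rw [← hS, hSsymm.mulVec_dotProduct_inv_mul_self_mulVec (hS ▸ hdet), hξ']
  have key := hΓ.mul_mul_dotProduct_inv_mulVec_le_of_orthogonal hdet hv1 hev1 hlam1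
    (le_max_left _ _) hμ hξ horth
  rw [hinv, mul_one, hnorm] at key
  calc lam1 * lam2 ≤ lam1 * max lam1 lam2 := by gcongr; exact le_max_right _ _
    _ ≤ _ := key

/-- For a real symmetric positive definite matrix `Γ` with two smallest
eigenvalues `λ1 ≤ λ2` (characterized variationally via orthonormal eigenvectors), and any
real unit vectors `ξ, ξ'` with `⟨ξ, Γ^{1/2} ξ'⟩ = 0`, we have
`⟨ξ, Γ ξ⟩ ⟨ξ', Γ ξ'⟩ ≥ λ1 λ2`. -/
theorem quadratic_form_product_lower_bound (n : ℕ)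
    (Γ : Matrix (Fin (2 * n)) (Fin (2 * n)) ℝ)
    (hΓ : Γ.IsSymm) (hΓpd : Γ.PosDef)
    (lam1 lam2 : ℝ) (v1 v2 : Fin (2 * n) → ℝ)
    (hv1 : v1 ⬝ᵥ v1 = 1) (hv2 : v2 ⬝ᵥ v2 = 1) (hv12 : v1 ⬝ᵥ v2 = 0)
    (hev1 : Γ.mulVec v1 = lam1 • v1) (hev2 : Γ.mulVec v2 = lam2 • v2)
    (hmin1 : ∀ x : Fin (2 * n) → ℝ, x ⬝ᵥ x = 1 → lam1 ≤ x ⬝ᵥ Γ.mulVec x)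
    (hmin2 : ∀ x : Fin (2 * n) → ℝ, x ⬝ᵥ x = 1 → x ⬝ᵥ v1 = 0 → lam2 ≤ x ⬝ᵥ Γ.mulVec x)
    (ξ ξ' : Fin (2 * n) → ℝ) (hξ : ξ ⬝ᵥ ξ = 1) (hξ' : ξ' ⬝ᵥ ξ' = 1)
    (horth : ξ ⬝ᵥ (hΓpd.posSemidef.sqrt).mulVec ξ' = 0) :
    lam1 * lam2 ≤ (ξ ⬝ᵥ Γ.mulVec ξ) * (ξ' ⬝ᵥ Γ.mulVec ξ') :=
  quadratic_form_product_lower_bound_general n Γ hΓ hΓpd lam1 lam2 v1 hv1 hev1 hmin1 hmin2 ξ ξ' hξ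
    hξ' horth
end

section
/- In the lower bound ⟨ξ, Γ ξ⟩⟨ξ', Γ ξ'⟩ ≥ λ_1 λ_2 over real unit vectors with ⟨ξ, Γ^{1/2} ξ'⟩ = 0, equality is attained: for any angle φ, the vectors ξ = cos φ · v_1 + sin φ · v_2 and ξ' proportional to √λ_2 sin φ · v_1 − √λ_1 cos φ · v_2 (normalized), where v_1, v_2 are orthonormal eigenvectors for the two smallest eigenvalues λ_1, λ_2, satisfy ⟨ξ, Γ^{1/2} ξ'⟩ = 0 and ⟨ξ, Γ ξ⟩⟨ξ', Γ ξ'⟩ = λ_1 λ_2. -/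
/-!
On the plane spanned by `v1, v2`, both `Γ` and its square root `Γ^{1/2}` act diagonally, with
entries `λ1, λ2` and `√λ1, √λ2`, so every quantity involved is an explicit expression in
`cos φ`, `sin φ`, `√λ1`, `√λ2`. With `D = λ1 cos² φ + λ2 sin² φ`, one gets `⟨ξ, Γ ξ⟩ = D` and
`⟨ξ', Γ ξ'⟩ = λ1 λ2 / D`, while the two cross terms of `⟨ξ, Γ^{1/2} ξ'⟩` cancel.
-/

open Matrix

namespace Matrix.IsHermitian

variable {𝕜 n : Type*} [RCLike 𝕜] [Fintype n] [DecidableEq n] {A : Matrix n n 𝕜}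

theorem cfc_mulVec_of_mulVec_eq_smul (hA : A.IsHermitian) (f : ℝ → ℝ) {μ : ℝ} {v : n → 𝕜}
    (hv : A *ᵥ v = (μ : 𝕜) • v) : hA.cfc f *ᵥ v = (f μ : 𝕜) • v := by
  set U : Matrix n n 𝕜 := ↑hA.eigenvectorUnitary
  set w := star U *ᵥ v
  have hUw : U *ᵥ w = v := by simp [w, U, mulVec_mulVec]
  have hDw : diagonal (RCLike.ofReal ∘ hA.eigenvalues) *ᵥ w = (μ : 𝕜) • w := by
    have h := congrArg (star U *ᵥ ·) hv
    rw [hA.spectral_theorem, Unitary.conjStarAlgAut_apply, mulVec_smul] at h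
    simpa [w, U, mulVec_mulVec, ← Matrix.mul_assoc] using h
  -- `w` is supported on the indices whose eigenvalue is `μ`, where `f ∘ eigenvalues` equals `f μ`.
  have hfw : diagonal (RCLike.ofReal ∘ f ∘ hA.eigenvalues) *ᵥ w = (f μ : 𝕜) • w := by
    funext i
    have hi := congrFun hDw i
    simp only [mulVec_diagonal, Function.comp_apply, Pi.smul_apply, smul_eq_mul] at hi ⊢
    by_cases hwi : w i = 0
    · simp [hwi]
    · rw [RCLike.ofReal_inj.mp (mul_right_cancel₀ hwi hi)]
  rw [IsHermitian.cfc, Unitary.conjStarAlgAut_apply, ← mulVec_mulVec, ← mulVec_mulVec, hfw,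
    mulVec_smul, hUw]

end Matrix.IsHermitian

theorem Matrix.PosDef.eigenvalue_pos {m : Type*} [Fintype m] {A : Matrix m m ℝ} (hA : A.PosDef)
    {μ : ℝ} {v : m → ℝ} (hv0 : v ≠ 0) (hv : A *ᵥ v = μ • v) : 0 < μ := by
  have hquad := hA.dotProduct_mulVec_pos hv0
  rw [star_trivial, hv, dotProduct_smul, smul_eq_mul] at hquad
  exact pos_of_mul_pos_left hquad (dotProduct_self_star_nonneg v)

theorem dotProduct_mulVec_of_orthonormal_eigenvectors {R m : Type*} [CommRing R] [Fintype m]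
    {M : Matrix m m R} {v₁ v₂ : m → R} {μ₁ μ₂ : R} (h₁ : v₁ ⬝ᵥ v₁ = 1) (h₂ : v₂ ⬝ᵥ v₂ = 1)
    (h₁₂ : v₁ ⬝ᵥ v₂ = 0) (hM₁ : M *ᵥ v₁ = μ₁ • v₁) (hM₂ : M *ᵥ v₂ = μ₂ • v₂) (a b c d : R) :
    (a • v₁ + b • v₂) ⬝ᵥ M *ᵥ (c • v₁ + d • v₂) = μ₁ * a * c + μ₂ * b * d := by
  have h₂₁ : v₂ ⬝ᵥ v₁ = 0 := by rwa [dotProduct_comm]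
  simp only [mulVec_add, mulVec_smul, hM₁, hM₂, smul_smul, add_dotProduct, dotProduct_add,
    smul_dotProduct, dotProduct_smul, h₁, h₂, h₁₂, h₂₁, smul_eq_mul]
  ring

theorem quadratic_form_product_lower_bound_attained_general (n : ℕ)
    (Γ : Matrix (Fin (2 * n)) (Fin (2 * n)) ℝ)
    (hΓpd : Γ.PosDef)
    (lam1 lam2 : ℝ) (v1 v2 : Fin (2 * n) → ℝ)
    (hv1 : v1 ⬝ᵥ v1 = 1) (hv2 : v2 ⬝ᵥ v2 = 1) (hv12 : v1 ⬝ᵥ v2 = 0)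
    (hev1 : Γ.mulVec v1 = lam1 • v1) (hev2 : Γ.mulVec v2 = lam2 • v2)
    (φ : ℝ)
    (ξ ξ' : Fin (2 * n) → ℝ)
    (hξdef : ξ = Real.cos φ • v1 + Real.sin φ • v2)
    (hξ'def : ξ' = (Real.sqrt (lam2 * Real.sin φ ^ 2 + lam1 * Real.cos φ ^ 2))⁻¹ •
      ((Real.sqrt lam2 * Real.sin φ) • v1 - (Real.sqrt lam1 * Real.cos φ) • v2)) :
    ξ ⬝ᵥ ((hΓpd.posSemidef.isHermitian.eigenvectorUnitary : Matrix (Fin (2 * n)) (Fin (2 * n)) ℝ) *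
      diagonal (Real.sqrt ∘ hΓpd.posSemidef.isHermitian.eigenvalues) *
      (star hΓpd.posSemidef.isHermitian.eigenvectorUnitary : Matrix (Fin (2 * n)) (Fin (2 * n)) ℝ)).mulVec ξ' = 0 ∧
      (ξ ⬝ᵥ Γ.mulVec ξ) * (ξ' ⬝ᵥ Γ.mulVec ξ') = lam1 * lam2 := by
  have hΓh := hΓpd.posSemidef.isHermitian
  have hlam1 : 0 < lam1 := hΓpd.eigenvalue_pos (by rintro rfl; simp at hv1) hev1
  have hlam2 : 0 < lam2 := hΓpd.eigenvalue_pos (by rintro rfl; simp at hv2) hev2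
  have hsqrt1 : hΓh.cfc Real.sqrt *ᵥ v1 = Real.sqrt lam1 • v1 :=
    hΓh.cfc_mulVec_of_mulVec_eq_smul Real.sqrt hev1
  have hsqrt2 : hΓh.cfc Real.sqrt *ᵥ v2 = Real.sqrt lam2 • v2 :=
    hΓh.cfc_mulVec_of_mulVec_eq_smul Real.sqrt hev2
  set c := Real.cos φ
  set s := Real.sin φ
  have hsc : s ^ 2 + c ^ 2 = 1 := Real.sin_sq_add_cos_sq φ
  have hD : 0 < lam2 * s ^ 2 + lam1 * c ^ 2 := by
    rcases le_total lam1 lam2 with h | h <;> nlinarith [sq_nonneg s, sq_nonneg c]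
  set t := (Real.sqrt (lam2 * s ^ 2 + lam1 * c ^ 2))⁻¹
  have ht : t ^ 2 * (lam2 * s ^ 2 + lam1 * c ^ 2) = 1 := by
    rw [inv_pow, Real.sq_sqrt hD.le, inv_mul_cancel₀ hD.ne']
  have hξ' : ξ' = (t * (Real.sqrt lam2 * s)) • v1 + (-(t * (Real.sqrt lam1 * c))) • v2 := by
    rw [hξ'def, smul_sub, smul_smul, smul_smul, neg_smul, sub_eq_add_neg]
  rw [hξdef, hξ']
  refine ⟨?_, ?_⟩
  · -- the triple product in the statement is `IsHermitian.cfc Real.sqrt` by definition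
    change _ ⬝ᵥ hΓh.cfc Real.sqrt *ᵥ _ = 0
    rw [dotProduct_mulVec_of_orthonormal_eigenvectors hv1 hv2 hv12 hsqrt1 hsqrt2]
    ring
  · rw [dotProduct_mulVec_of_orthonormal_eigenvectors hv1 hv2 hv12 hev1 hev2,
      dotProduct_mulVec_of_orthonormal_eigenvectors hv1 hv2 hv12 hev1 hev2]
    linear_combination (lam1 * lam2 * (s ^ 2 + c ^ 2)) * ht
      + (lam1 * s ^ 2 * t ^ 2 * (lam2 * s ^ 2 + lam1 * c ^ 2)) * Real.sq_sqrt hlam2.le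
      + (lam2 * c ^ 2 * t ^ 2 * (lam2 * s ^ 2 + lam1 * c ^ 2)) * Real.sq_sqrt hlam1.le
      + lam1 * lam2 * hsc

/-- Equality in the bound `⟨ξ,Γξ⟩⟨ξ',Γξ'⟩ ≥ λ1 λ2` is attained: for any
angle `φ`, the vectors `ξ = cos φ • v1 + sin φ • v2` and the normalization of
`√λ2 sin φ • v1 − √λ1 cos φ • v2` satisfy `⟨ξ, Γ^{1/2} ξ'⟩ = 0` and
`⟨ξ,Γξ⟩⟨ξ',Γξ'⟩ = λ1 λ2`, where `v1, v2` are orthonormal eigenvectors of the two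
smallest eigenvalues `λ1 ≤ λ2`. -/
theorem quadratic_form_product_lower_bound_attained (n : ℕ)
    (Γ : Matrix (Fin (2 * n)) (Fin (2 * n)) ℝ)
    (hΓ : Γ.IsSymm) (hΓpd : Γ.PosDef)
    (lam1 lam2 : ℝ) (v1 v2 : Fin (2 * n) → ℝ)
    (hv1 : v1 ⬝ᵥ v1 = 1) (hv2 : v2 ⬝ᵥ v2 = 1) (hv12 : v1 ⬝ᵥ v2 = 0)
    (hev1 : Γ.mulVec v1 = lam1 • v1) (hev2 : Γ.mulVec v2 = lam2 • v2)
    (hmin1 : ∀ x : Fin (2 * n) → ℝ, x ⬝ᵥ x = 1 → lam1 ≤ x ⬝ᵥ Γ.mulVec x)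
    (hmin2 : ∀ x : Fin (2 * n) → ℝ, x ⬝ᵥ x = 1 → x ⬝ᵥ v1 = 0 → lam2 ≤ x ⬝ᵥ Γ.mulVec x)
    (φ : ℝ)
    (ξ ξ' : Fin (2 * n) → ℝ)
    (hξdef : ξ = Real.cos φ • v1 + Real.sin φ • v2)
    (hξ'def : ξ' = (Real.sqrt (lam2 * Real.sin φ ^ 2 + lam1 * Real.cos φ ^ 2))⁻¹ •
      ((Real.sqrt lam2 * Real.sin φ) • v1 - (Real.sqrt lam1 * Real.cos φ) • v2)) :
    ξ ⬝ᵥ ((hΓpd.posSemidef.isHermitian.eigenvectorUnitary : Matrix (Fin (2 * n)) (Fin (2 * n)) ℝ) *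
      diagonal (Real.sqrt ∘ hΓpd.posSemidef.isHermitian.eigenvalues) *
      (star hΓpd.posSemidef.isHermitian.eigenvectorUnitary : Matrix (Fin (2 * n)) (Fin (2 * n)) ℝ)).mulVec ξ' = 0 ∧
      (ξ ⬝ᵥ Γ.mulVec ξ) * (ξ' ⬝ᵥ Γ.mulVec ξ') = lam1 * lam2 :=
  quadratic_form_product_lower_bound_attained_general n Γ hΓpd lam1 lam2 v1 v2 hv1 hv2 hv12 hev1
    hev2 φ ξ ξ' hξdef hξ'def
end

section
/- For any pair of orthogonal real unit vectors ξ, η in ℝ^4 (two modes), there exists a passive transformation K (real symplectic orthogonal 4×4 matrix) such that ⟨η, K σ̃ K^T ξ⟩ = 1, where σ̃ is the partially transposed symplectic matrix for the 1+1 mode split. -/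
open Matrix

/-! A passive transformation is a unitary map of `ℂ²`, the complex structure on `ℝ⁴` being the
symplectic matrix. Since `ℝ⁴` has room for a unit vector `u` orthogonal to `ξ`, `J ξ` and `η`, the
pair `(ξ, u)` spans a passive frame in whose coordinates `ξ = e_{q₁}` and `η = t e_{p₁} + s e_{p₂}`,
with `t² + s² = 1` because the frame is orthonormal. It then remains to find a beam splitter
`R ⊕ R` with `⟨t e_{p₁} + s e_{p₂}, (R ⊕ R) σ̃ (R ⊕ R)ᵀ e_{q₁}⟩ = 1`: the rotation `R` by half the
angle of `-(t, s)` does it, and its entries come from a complex square root of `-(t + i s)`. -/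

theorem exists_dotProduct_self_eq_one_mulVec_eq_zero {m n : Type*} [Fintype m] [Fintype n]
    (M : Matrix m n ℝ) (h : Fintype.card m < Fintype.card n) :
    ∃ u : n → ℝ, u ⬝ᵥ u = 1 ∧ M *ᵥ u = 0 := by
  obtain ⟨v, hv, hv0⟩ := Submodule.exists_mem_ne_zero_of_ne_bot
    (LinearMap.ker_ne_bot_of_finrank_lt (f := M.mulVecLin) (by simpa using h))
  have hpos : 0 < v ⬝ᵥ v :=
    (Fintype.sum_nonneg fun i => mul_self_nonneg (v i)).lt_of_ne'
      (mt dotProduct_self_eq_zero.mp hv0)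
  refine ⟨(√(v ⬝ᵥ v))⁻¹ • v, ?_, ?_⟩
  · rw [smul_dotProduct, dotProduct_smul, smul_smul, smul_eq_mul, ← sq, inv_pow,
      Real.sq_sqrt hpos.le, inv_mul_cancel₀ hpos.ne']
  · rw [mulVec_smul, show M *ᵥ v = 0 from hv, smul_zero]

theorem exists_sq_sub_sq_eq_and_two_mul_eq {t s : ℝ} (h : t ^ 2 + s ^ 2 = 1) :
    ∃ α β : ℝ, α ^ 2 + β ^ 2 = 1 ∧ α ^ 2 - β ^ 2 = t ∧ 2 * α * β = s := by
  obtain ⟨z, hz⟩ := IsAlgClosed.exists_pow_nat_eq (⟨t, s⟩ : ℂ) two_pos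
  have hre : z.re ^ 2 - z.im ^ 2 = t := by simpa [sq] using congrArg Complex.re hz
  have him : 2 * z.re * z.im = s := by
    have := congrArg Complex.im hz
    simp only [sq, Complex.mul_im] at this
    linarith
  have hnorm : (z.re ^ 2 + z.im ^ 2) ^ 2 = 1 := by rw [← h, ← hre, ← him]; ring
  refine ⟨z.re, z.im, ?_, hre, him⟩
  nlinarith [sq_nonneg z.re, sq_nonneg z.im]

namespace Matrix

theorem dotProduct_mul_mul_transpose_mulVec {n R : Type*} [Fintype n] [CommSemiring R]
    (A M : Matrix n n R) (v w : n → R) :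
    v ⬝ᵥ (A * M * Aᵀ) *ᵥ w = (Aᵀ *ᵥ v) ⬝ᵥ M *ᵥ (Aᵀ *ᵥ w) := by
  rw [← mulVec_mulVec, ← mulVec_mulVec, dotProduct_mulVec, ← mulVec_transpose]

theorem of_mul_transpose_of {ι n R : Type*} [Fintype n] [CommSemiring R] (x : ι → n → R) :
    of x * (of x)ᵀ = of fun i j => x i ⬝ᵥ x j := by
  ext i j
  simp [mul_apply, dotProduct]

theorem of_mul_mul_transpose_of {ι n R : Type*} [Fintype n] [CommSemiring R]
    (x : ι → n → R) (A : Matrix n n R) :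
    of x * A * (of x)ᵀ = of fun i j => x i ⬝ᵥ A *ᵥ x j := by
  ext i j
  rw [Matrix.mul_assoc]
  simp [mul_apply, dotProduct, mulVec, Finset.mul_sum]

variable {ι : Type*} [DecidableEq ι]

theorem fromBlocks_zero_one_neg_one_zero_eq_neg_J :
    (fromBlocks 0 1 (-1) 0 : Matrix (ι ⊕ ι) (ι ⊕ ι) ℝ) = -J ι ℝ := by
  simp [J, fromBlocks_neg]

variable [Fintype ι]

theorem dotProduct_J_mulVec_comm (v w : ι ⊕ ι → ℝ) :
    v ⬝ᵥ J ι ℝ *ᵥ w = -(w ⬝ᵥ J ι ℝ *ᵥ v) := by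
  rw [dotProduct_mulVec, ← mulVec_transpose, J_transpose, neg_mulVec, neg_dotProduct,
    dotProduct_comm]

theorem dotProduct_J_mulVec_self (v : ι ⊕ ι → ℝ) : v ⬝ᵥ J ι ℝ *ᵥ v = 0 := by
  linarith [dotProduct_J_mulVec_comm v v]

variable (ι) in
def passiveGroup : Submonoid (Matrix (ι ⊕ ι) (ι ⊕ ι) ℝ) :=
  symplecticGroup ι ℝ ⊓ orthogonalGroup (ι ⊕ ι) ℝ

namespace passiveGroup

variable {K : Matrix (ι ⊕ ι) (ι ⊕ ι) ℝ}

theorem transpose_mul_self (hK : K ∈ passiveGroup ι) : Kᵀ * K = 1 :=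
  (mem_orthogonalGroup_iff' _ _).mp hK.2

theorem transpose_mul_J_mul (hK : K ∈ passiveGroup ι) : Kᵀ * J ι ℝ * K = J ι ℝ :=
  SymplecticGroup.mem_iff'.mp hK.1

theorem dotProduct_transpose_mulVec (hK : K ∈ passiveGroup ι) (v w : ι ⊕ ι → ℝ) :
    (Kᵀ *ᵥ v) ⬝ᵥ (Kᵀ *ᵥ w) = v ⬝ᵥ w := by
  simpa [(mem_orthogonalGroup_iff _ _).mp hK.2] using
    (dotProduct_mul_mul_transpose_mulVec K 1 v w).symm

theorem mem_of_commute (hK : Kᵀ * K = 1) (hJ : J ι ℝ * K = K * J ι ℝ) :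
    K ∈ passiveGroup ι := by
  refine ⟨SymplecticGroup.mem_iff'.mpr ?_, (mem_orthogonalGroup_iff' _ _).mpr hK⟩
  rw [Matrix.mul_assoc, hJ, ← Matrix.mul_assoc, hK, Matrix.one_mul]

theorem fromBlocks_mem {U : Matrix ι ι ℝ} (hU : Uᵀ * U = 1) :
    fromBlocks U 0 0 U ∈ passiveGroup ι := by
  refine mem_of_commute ?_ ?_
  · simp [fromBlocks_transpose, fromBlocks_multiply, hU]
  · simp [J, fromBlocks_multiply]

end passiveGroup

def complexFrame (Y : Matrix ι (ι ⊕ ι) ℝ) : Matrix (ι ⊕ ι) (ι ⊕ ι) ℝ :=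
  fromCols Yᵀ (J ι ℝ * Yᵀ)

theorem transpose_complexFrame_mulVec (Y : Matrix ι (ι ⊕ ι) ℝ) (v : ι ⊕ ι → ℝ) :
    (complexFrame Y)ᵀ *ᵥ v = Sum.elim (Y *ᵥ v) (-(Y *ᵥ J ι ℝ *ᵥ v)) := by
  simp [complexFrame, transpose_fromCols, fromRows_mulVec, mulVec_mulVec, neg_mulVec]

theorem complexFrame_mem_passiveGroup {Y : Matrix ι (ι ⊕ ι) ℝ} (h₁ : Y * Yᵀ = 1)
    (h₂ : Y * J ι ℝ * Yᵀ = 0) : complexFrame Y ∈ passiveGroup ι := by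
  refine passiveGroup.mem_of_commute ?_ ?_
  · have hJJ : J ι ℝ * (J ι ℝ * Yᵀ) = -Yᵀ := by
      rw [← Matrix.mul_assoc, J_squared, Matrix.neg_mul, Matrix.one_mul]
    have h₂' : Y * (J ι ℝ * Yᵀ) = 0 := by rw [← Matrix.mul_assoc, h₂]
    simp [complexFrame, transpose_fromCols, Matrix.mul_assoc, hJJ, h₁, h₂']
  · rw [complexFrame, mul_fromCols, ← Matrix.mul_assoc, J_squared]
    simp [J, fromCols_mul_fromBlocks]

theorem complexFrame_of_pair_mem_passiveGroup {x y : Fin 2 ⊕ Fin 2 → ℝ} (hx : x ⬝ᵥ x = 1)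
    (hy : y ⬝ᵥ y = 1) (hyx : y ⬝ᵥ x = 0) (hyJx : y ⬝ᵥ J (Fin 2) ℝ *ᵥ x = 0) :
    complexFrame (of ![x, y]) ∈ passiveGroup (Fin 2) := by
  refine complexFrame_mem_passiveGroup ?_ ?_
  · rw [of_mul_transpose_of]
    ext i j; fin_cases i <;> fin_cases j <;> simp [hx, hy, hyx, dotProduct_comm x y]
  · rw [of_mul_mul_transpose_of]
    ext i j; fin_cases i <;> fin_cases j <;>
      simp [dotProduct_J_mulVec_self, hyJx, dotProduct_J_mulVec_comm x y]

theorem exists_mem_passiveGroup_transpose_mulVec_eq {ξ η : Fin 2 ⊕ Fin 2 → ℝ}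
    (hξ : ξ ⬝ᵥ ξ = 1) (horth : η ⬝ᵥ ξ = 0) :
    ∃ F ∈ passiveGroup (Fin 2), ∃ t s : ℝ,
      Fᵀ *ᵥ ξ = Sum.elim ![1, 0] ![0, 0] ∧ Fᵀ *ᵥ η = Sum.elim ![0, 0] ![t, s] := by
  obtain ⟨u, hu, hperp⟩ := exists_dotProduct_self_eq_one_mulVec_eq_zero
    (of ![ξ, J (Fin 2) ℝ *ᵥ ξ, η]) (by simp)
  have huξ : u ⬝ᵥ ξ = 0 := by simpa [dotProduct_comm] using congrFun hperp 0
  have huJξ : u ⬝ᵥ J (Fin 2) ℝ *ᵥ ξ = 0 := by simpa [dotProduct_comm] using congrFun hperp 1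
  have huη : u ⬝ᵥ η = 0 := by simpa [dotProduct_comm] using congrFun hperp 2
  refine ⟨_, complexFrame_of_pair_mem_passiveGroup hξ hu huξ huJξ,
    -(ξ ⬝ᵥ J (Fin 2) ℝ *ᵥ η), -(u ⬝ᵥ J (Fin 2) ℝ *ᵥ η), ?_, ?_⟩ <;>
    rw [transpose_complexFrame_mulVec]
  · simp [-mulVec_mulVec, hξ, huξ, dotProduct_J_mulVec_self, huJξ]
  · simp [-mulVec_mulVec, dotProduct_comm ξ η, horth, huη]

theorem exists_orthogonal_dotProduct_partialTranspose_eq_one {t s : ℝ} (h : t ^ 2 + s ^ 2 = 1) :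
    ∃ R : Matrix (Fin 2) (Fin 2) ℝ, Rᵀ * R = 1 ∧
      (fromBlocks R 0 0 R)ᵀ *ᵥ Sum.elim ![0, 0] ![t, s] ⬝ᵥ
        (fromBlocks 1 0 0 (diagonal ![1, -1]) * fromBlocks 0 1 (-1) 0 *
          fromBlocks 1 0 0 (diagonal ![1, -1])) *ᵥ
        ((fromBlocks R 0 0 R)ᵀ *ᵥ Sum.elim ![1, 0] ![0, 0]) = 1 := by
  obtain ⟨α, β, hαβ, hα, hβ⟩ :=
    exists_sq_sub_sq_eq_and_two_mul_eq (t := -t) (s := -s) (by linear_combination h)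
  refine ⟨!![α, -β; β, α], ?_, ?_⟩
  · ext i j; fin_cases i <;> fin_cases j <;>
      simp [mul_apply, Fin.sum_univ_two, ← hαβ, sq, mul_comm, add_comm]
  · simp only [dotProduct, mulVec, transpose_apply, Fintype.sum_sum_type, Sum.elim_inl,
      Sum.elim_inr, Fin.sum_univ_two, Fin.isValue, cons_val_zero, cons_val_one, cons_val_fin_one,
      cons_val', of_apply, mul_zero, zero_mul, add_zero, zero_add, mul_one, one_mul, mul_neg,
      neg_mul, neg_zero, neg_neg, Nat.succ_eq_add_one, Nat.reduceAdd, fromBlocks_multiply,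
      diagonal_neg, fromBlocks_apply₁₁, fromBlocks_apply₁₂, fromBlocks_apply₂₁, fromBlocks_apply₂₂,
      zero_apply, Finset.sum_const_zero, diagonal_apply_eq, diagonal_apply_ne, ne_eq, zero_ne_one,
      one_ne_zero, not_false_eq_true]
    linear_combination (-t) * hα + (-s) * hβ + h

end Matrix

/-- For any pair of orthogonal real unit vectors `ξ, η ∈ ℝ⁴` (two modes),
there exists a passive (real symplectic orthogonal) transformation `K` such that
`⟨η, K σ̃ Kᵀ ξ⟩ = 1`, where `σ̃` is the partially transposed symplectic matrix for the
`1+1` mode split. -/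
theorem exists_passive_achieving_one
    (σ : Matrix (Fin 2 ⊕ Fin 2) (Fin 2 ⊕ Fin 2) ℝ)
    (hσ : σ = Matrix.fromBlocks 0 1 (-1) 0)
    (E : Matrix (Fin 2) (Fin 2) ℝ) (hE : E = Matrix.diagonal ![1, -1])
    (σt : Matrix (Fin 2 ⊕ Fin 2) (Fin 2 ⊕ Fin 2) ℝ)
    (hσt : σt = (Matrix.fromBlocks 1 0 0 E) * σ * (Matrix.fromBlocks 1 0 0 E))
    (ξ η : Fin 2 ⊕ Fin 2 → ℝ)
    (hξ : ξ ⬝ᵥ ξ = 1) (hη : η ⬝ᵥ η = 1) (horth : η ⬝ᵥ ξ = 0) :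
    ∃ K : Matrix (Fin 2 ⊕ Fin 2) (Fin 2 ⊕ Fin 2) ℝ,
      Kᵀ * σ * K = σ ∧ Kᵀ * K = 1 ∧ η ⬝ᵥ (K * σt * Kᵀ).mulVec ξ = 1 := by
  subst hσ hE hσt
  obtain ⟨F, hF, t, s, hFξ, hFη⟩ := exists_mem_passiveGroup_transpose_mulVec_eq hξ horth
  have hts : t ^ 2 + s ^ 2 = 1 := by
    have := passiveGroup.dotProduct_transpose_mulVec hF η η
    rw [hFη, hη] at this
    simpa [dotProduct, Fintype.sum_sum_type, sq] using this
  obtain ⟨R, hR, hone⟩ := exists_orthogonal_dotProduct_partialTranspose_eq_one hts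
  have hK := mul_mem hF (passiveGroup.fromBlocks_mem hR)
  refine ⟨F * fromBlocks R 0 0 R, ?_, passiveGroup.transpose_mul_self hK, ?_⟩
  · rw [fromBlocks_zero_one_neg_one_zero_eq_neg_J, Matrix.mul_neg, Matrix.neg_mul,
      passiveGroup.transpose_mul_J_mul hK]
  · rw [dotProduct_mul_mul_transpose_mulVec, transpose_mul, ← mulVec_mulVec ξ,
      ← mulVec_mulVec η, hFξ, hFη, hone]
end

section
/- Let Ψ = (1,0)^T ∈ ℂ^2 and let Φ ∈ ℂ^2 be any unit vector with Re[⟨Φ, Ψ⟩] = 0. Then there exist angles γ, α and a 2×2 unitary U = [[e^{−iα} cos γ, −e^{−iα} sin γ],[e^{iα} sin γ, e^{iα} cos γ]] such that Im[⟨Φ, U E U† Ψ⟩] = 1, where E = diag(1, −1). -/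
/-!
The Hermitian reflection `U E Uᴴ` sends `Ψ = e₀` to `(cos 2γ, e^{2iα} sin 2γ)`, and as `γ, α` vary
these vectors exhaust the unit vectors of `ℂ²` with real first coordinate. Since
`Re ⟨Φ, Ψ⟩ = Re (Φ 0) = 0`, the unit vector `iΦ` is one of them, so for a suitable choice
`U E Uᴴ Ψ = iΦ` and `⟨Φ, U E Uᴴ Ψ⟩ = i ⟨Φ, Φ⟩ = i`.
-/

open Matrix Complex

noncomputable def beamSplitter (γ α : ℝ) : Matrix (Fin 2) (Fin 2) ℂ :=
  !![exp (-I * α) * Real.cos γ, -(exp (-I * α) * Real.sin γ);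
     exp (I * α) * Real.sin γ, exp (I * α) * Real.cos γ]

lemma cexp_mul_cexp_neg (z : ℂ) : exp z * exp (-z) = 1 := by
  rw [← exp_add, add_neg_cancel, exp_zero]

lemma conjTranspose_beamSplitter (γ α : ℝ) :
    (beamSplitter γ α)ᴴ =
      !![exp (I * α) * Real.cos γ, exp (-I * α) * Real.sin γ;
         -(exp (I * α) * Real.sin γ), exp (-I * α) * Real.cos γ] := by
  ext i j
  fin_cases i <;> fin_cases j <;> simp [beamSplitter, ← Complex.exp_conj, -ofReal_cos, -ofReal_sin]

lemma beamSplitter_mem_unitaryGroup (γ α : ℝ) :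
    beamSplitter γ α ∈ unitaryGroup (Fin 2) ℂ := by
  have hpyth : (Real.cos γ : ℂ) ^ 2 + (Real.sin γ : ℂ) ^ 2 = 1 := by
    exact_mod_cast Real.cos_sq_add_sin_sq γ
  have hexp := cexp_mul_cexp_neg (I * α)
  rw [mem_unitaryGroup_iff', star_eq_conjTranspose, conjTranspose_beamSplitter, beamSplitter,
    mul_fin_two, one_fin_two]
  simp only [EmbeddingLike.apply_eq_iff_eq, vecCons_inj, and_true, neg_mul]
  refine ⟨⟨?_, by ring⟩, by ring, ?_⟩ <;>
    linear_combination ((Real.cos γ : ℂ) ^ 2 + (Real.sin γ : ℂ) ^ 2) * hexp + hpyth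

lemma beamSplitter_mul_diagonal_mul_conjTranspose_mulVec (γ α : ℝ) :
    (beamSplitter γ α * diagonal ![1, -1] * (beamSplitter γ α)ᴴ) *ᵥ ![1, 0] =
      ![(Real.cos (2 * γ) : ℂ), exp (2 * α * I) * Real.sin (2 * γ)] := by
  have hpyth : (Real.cos γ : ℂ) ^ 2 + (Real.sin γ : ℂ) ^ 2 = 1 := by
    exact_mod_cast Real.cos_sq_add_sin_sq γ
  have hexp := cexp_mul_cexp_neg (I * α)
  have hexp2 : exp (2 * α * I) = exp (I * α) * exp (I * α) := by rw [← exp_add]; ring_nf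
  rw [conjTranspose_beamSplitter, beamSplitter, diagonal_vec2, mul_fin_two, mul_fin_two,
    Real.cos_two_mul, Real.sin_two_mul]
  simp only [cons_mulVec, empty_mulVec, vec2_dotProduct', mul_one, mul_zero, add_zero, neg_mul,
    ofReal_sub, ofReal_mul, ofReal_pow, ofReal_ofNat, ofReal_one]
  refine vec2_eq ?_ ?_
  · linear_combination ((Real.cos γ : ℂ) ^ 2 - (Real.sin γ : ℂ) ^ 2) * hexp - hpyth
  · linear_combination -2 * (Real.sin γ : ℂ) * Real.cos γ * hexp2

lemma exists_cos_eq_and_exp_mul_sin_eq {x : ℝ} {z : ℂ} (h : x ^ 2 + normSq z = 1) :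
    ∃ θ φ : ℝ, Real.cos θ = x ∧ exp (φ * I) * Real.sin θ = z := by
  have hx : x ^ 2 ≤ 1 := by linarith [normSq_nonneg z]
  obtain ⟨hx₁, hx₂⟩ := abs_le.mp (sq_le_one_iff_abs_le_one x |>.mp hx)
  refine ⟨Real.arccos x, arg z, Real.cos_arccos hx₁ hx₂, ?_⟩
  have : Real.sin (Real.arccos x) = ‖z‖ := by
    rw [Real.sin_arccos, norm_def, ← h, add_sub_cancel_left]
  rw [this, mul_comm]
  exact norm_mul_exp_arg_mul_I z

lemma exists_eq_cos_two_mul_exp_mul_sin_two_mul {w : Fin 2 → ℂ} (hw : star w ⬝ᵥ w = 1)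
    (hw₀ : (w 0).im = 0) :
    ∃ γ α : ℝ, w = ![(Real.cos (2 * γ) : ℂ), exp (2 * α * I) * Real.sin (2 * γ)] := by
  have hnorm : (w 0).re ^ 2 + normSq (w 1) = 1 := by
    have h : ((normSq (w 0) + normSq (w 1) : ℝ) : ℂ) = 1 := by
      simpa [dotProduct, Fin.sum_univ_two, mul_comm, mul_conj] using hw
    rw [ofReal_eq_one, normSq_apply, hw₀, mul_zero, add_zero, ← sq] at h
    exact h
  obtain ⟨θ, φ, hθ, hφ⟩ := exists_cos_eq_and_exp_mul_sin_eq hnorm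
  refine ⟨θ / 2, φ / 2, ?_⟩
  rw [mul_div_cancel₀ θ two_ne_zero]
  ext i
  fin_cases i
  · simp [hθ, Complex.ext_iff, hw₀]
  · simpa [mul_div_cancel₀] using hφ.symm

/-- For `Ψ = (1,0)ᵀ ∈ ℂ²` and any unit vector `Φ ∈ ℂ²` with
`Re⟨Φ, Ψ⟩ = 0`, there exist angles `γ, α` such that the unitary
`U = [[e^{−iα} cos γ, −e^{−iα} sin γ],[e^{iα} sin γ, e^{iα} cos γ]]` satisfies
`Im⟨Φ, U E U† Ψ⟩ = 1`, where `E = diag(1, −1)`. -/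
theorem exists_beam_splitter_phase_achieving_one
    (Ψ Φ : Fin 2 → ℂ) (hΨ : Ψ = ![1, 0])
    (hΦunit : (star Φ) ⬝ᵥ Φ = 1)
    (hRe : ((star Φ) ⬝ᵥ Ψ).re = 0)
    (E : Matrix (Fin 2) (Fin 2) ℂ) (hE : E = Matrix.diagonal ![1, -1]) :
    ∃ (γ α : ℝ) (U : Matrix (Fin 2) (Fin 2) ℂ),
      U = !![Complex.exp (-Complex.I * α) * Real.cos γ,
             -(Complex.exp (-Complex.I * α) * Real.sin γ);
             Complex.exp (Complex.I * α) * Real.sin γ,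
             Complex.exp (Complex.I * α) * Real.cos γ] ∧
      U ∈ Matrix.unitaryGroup (Fin 2) ℂ ∧
      ((star Φ) ⬝ᵥ (U * E * Uᴴ).mulVec Ψ).im = 1 := by
  subst hΨ hE
  have hIΦ : star (I • Φ) ⬝ᵥ (I • Φ) = 1 := by
    simp [star_smul, dotProduct_smul, smul_dotProduct, hΦunit]
  have hIΦ₀ : ((I • Φ) 0).im = 0 := by
    simpa [dotProduct, Fin.sum_univ_two] using hRe
  obtain ⟨γ, α, hγα⟩ := exists_eq_cos_two_mul_exp_mul_sin_two_mul hIΦ hIΦ₀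
  refine ⟨γ, α, beamSplitter γ α, rfl, beamSplitter_mem_unitaryGroup γ α, ?_⟩
  rw [beamSplitter_mul_diagonal_mul_conjTranspose_mulVec, ← hγα, dotProduct_smul, hΦunit]
  simp
end

section
/- Let Γ be a 4×4 real symmetric covariance matrix of a two-mode Gaussian state satisfying Γ + iσ ≥ 0. Then the product s_1 s_2 of the two symplectic eigenvalues of the partially transposed matrix Γ̃ = (I_2 ⊕ E)Γ(I_2 ⊕ E) satisfies (s_1 s_2)^2 = det Γ ≥ 1; consequently at most one symplectic eigenvalue of Γ̃ is less than 1. -/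
/-!
The determinant identity is bookkeeping: the partial transposition `I ⊕ E` has determinant `-1`
and `σ = -J` is symplectic, so `det (-(Γ̃σ)²) = (det Γ)²`, while the constant coefficient of the
characteristic polynomial gives the same determinant as `(s₁ s₂)⁴`.

For `det Γ ≥ 1`: transposing `Γ + iσ ≥ 0` gives `Γ - iσ ≥ 0`, so `-Γ ≤ iσ ≤ Γ` in the Loewner
order. Conjugating by `Γ^{-1/2}` turns this into `-1 ≤ K ≤ 1` for a Hermitian `K`, whose
eigenvalues therefore lie in `[-1, 1]`; hence `|det σ| = |det (iσ)| ≤ det Γ`.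
-/

open Matrix Polynomial
open scoped ComplexOrder

namespace Matrix

variable {𝕜 n : Type*} [RCLike 𝕜]

lemma posSemidef_of_posSemidef_add_of_posSemidef_sub {A H : Matrix n n 𝕜}
    (h₁ : (A + H).PosSemidef) (h₂ : (A - H).PosSemidef) : A.PosSemidef := by
  convert (h₁.add h₂).smul (show (0 : 𝕜) ≤ 2⁻¹ by positivity) using 1
  rw [add_add_sub_cancel, ← two_smul 𝕜, smul_smul, inv_mul_cancel₀ two_ne_zero, one_smul]

variable [Fintype n] [DecidableEq n]

lemma IsHermitian.abs_eigenvalues_le_one {K : Matrix n n 𝕜} (hK : K.IsHermitian)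
    (h₁ : (1 + K).PosSemidef) (h₂ : (1 - K).PosSemidef) (i : n) :
    |hK.eigenvalues i| ≤ 1 := by
  set v : n → 𝕜 := ⇑(hK.eigenvectorBasis i)
  have hv : RCLike.re (star v ⬝ᵥ v) = 1 := by
    rw [dotProduct_comm, ← EuclideanSpace.inner_eq_star_dotProduct, inner_self_eq_norm_sq_to_K,
      hK.eigenvectorBasis.orthonormal.1 i]
    simp
  have hplus := h₁.re_dotProduct_nonneg v
  have hminus := h₂.re_dotProduct_nonneg v
  rw [add_mulVec, one_mulVec, dotProduct_add, map_add, hv, ← hK.eigenvalues_eq] at hplus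
  rw [sub_mulVec, one_mulVec, dotProduct_sub, map_sub, hv, ← hK.eigenvalues_eq] at hminus
  exact abs_le.2 ⟨by linarith, by linarith⟩

lemma IsHermitian.norm_det_le_one {K : Matrix n n 𝕜} (hK : K.IsHermitian)
    (h₁ : (1 + K).PosSemidef) (h₂ : (1 - K).PosSemidef) : ‖K.det‖ ≤ 1 := by
  rw [hK.det_eq_prod_eigenvalues, norm_prod]
  refine Finset.prod_le_one (fun _ _ ↦ norm_nonneg _) fun i _ ↦ ?_
  simpa using hK.abs_eigenvalues_le_one h₁ h₂ i

variable {A H : Matrix n n 𝕜}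

lemma posDef_of_posSemidef_add_of_posSemidef_sub (h₁ : (A + H).PosSemidef)
    (h₂ : (A - H).PosSemidef) (hH : IsUnit H) : A.PosDef := by
  have hA := posSemidef_of_posSemidef_add_of_posSemidef_sub h₁ h₂
  refine .of_dotProduct_mulVec_pos hA.1 fun x hx ↦ (hA.dotProduct_mulVec_nonneg x).lt_of_ne' ?_
  intro hAx
  have hAx' : A *ᵥ x = 0 := (hA.dotProduct_mulVec_zero_iff x).1 hAx
  have hplus := h₁.dotProduct_mulVec_nonneg x
  have hminus := h₂.dotProduct_mulVec_nonneg x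
  rw [add_mulVec, hAx', zero_add] at hplus
  rw [sub_mulVec, hAx', zero_sub, dotProduct_neg, neg_nonneg] at hminus
  have hHx : (A + H) *ᵥ x = 0 := by
    rw [← h₁.dotProduct_mulVec_zero_iff, add_mulVec, hAx', zero_add]
    exact le_antisymm hminus hplus
  rw [add_mulVec, hAx', zero_add] at hHx
  exact hx (mulVec_injective_iff_isUnit.2 hH (hHx.trans (mulVec_zero H).symm))

open scoped MatrixOrder in
lemma PosDef.norm_det_le_of_posSemidef_add_of_posSemidef_sub (hA : A.PosDef)
    (hH : H.IsHermitian) (h₁ : (A + H).PosSemidef) (h₂ : (A - H).PosSemidef) :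
    ‖H.det‖ ≤ ‖A.det‖ := by
  set B := CFC.sqrt A
  have hBB : B * B = A := CFC.sqrt_mul_sqrt_self A hA.posSemidef.nonneg
  have hB : Bᴴ = B := (CFC.sqrt_nonneg A).posSemidef.isHermitian
  have hBunit : IsUnit B.det := by
    have := (isUnit_iff_isUnit_det A).1 hA.isUnit
    rw [← hBB, det_mul] at this
    exact isUnit_of_mul_isUnit_left this
  set C := B⁻¹
  have hC : Cᴴ = C := by rw [conjTranspose_nonsing_inv, hB]
  have hCB : C * B = 1 := nonsing_inv_mul B hBunit
  have hBC : B * C = 1 := mul_nonsing_inv B hBunit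
  have hCAC : C * A * C = 1 := by rw [← hBB, ← Matrix.mul_assoc, hCB, one_mul, hBC]
  set K := C * H * C
  have hHK : H = B * K * B := by
    simp only [K, ← Matrix.mul_assoc, hBC, one_mul]
    rw [Matrix.mul_assoc, hCB, mul_one]
  have hK : K.IsHermitian := by simpa [hC] using isHermitian_mul_mul_conjTranspose C hH
  have hplus : (1 + K).PosSemidef := by
    simpa [hC, mul_add, add_mul, hCAC] using h₁.mul_mul_conjTranspose_same C
  have hminus : (1 - K).PosSemidef := by
    simpa [hC, mul_sub, sub_mul, hCAC] using h₂.mul_mul_conjTranspose_same C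
  have hdet : H.det = K.det * A.det := calc
    H.det = (B * K * B).det := by rw [← hHK]
    _ = K.det * (B * B).det := by simp only [det_mul]; ring
    _ = K.det * A.det := by rw [hBB]
  rw [hdet, norm_mul]
  exact mul_le_of_le_one_left (norm_nonneg _) (hK.norm_det_le_one hplus hminus)

lemma norm_det_le_norm_det_of_posSemidef_add_of_posSemidef_sub (hH : H.IsHermitian)
    (h₁ : (A + H).PosSemidef) (h₂ : (A - H).PosSemidef) : ‖H.det‖ ≤ ‖A.det‖ := by
  by_cases hdet : H.det = 0
  · simp [hdet]
  have hA := posDef_of_posSemidef_add_of_posSemidef_sub h₁ h₂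
    ((isUnit_iff_isUnit_det H).2 (isUnit_iff_ne_zero.2 hdet))
  exact hA.norm_det_le_of_posSemidef_add_of_posSemidef_sub hH h₁ h₂

lemma abs_det_le_det_of_posSemidef_add_I_smul {Γ σ : Matrix n n ℝ} (hΓ : Γ.IsSymm)
    (hσ : σᵀ = -σ) (h : (Γ.map Complex.ofReal + Complex.I • σ.map Complex.ofReal).PosSemidef) :
    |σ.det| ≤ Γ.det := by
  set A := Γ.map Complex.ofReal
  set H := Complex.I • σ.map Complex.ofReal
  have hH : H.IsHermitian := by
    rw [IsHermitian, conjTranspose_smul, ← conjTranspose_map _ fun x ↦ (Complex.conj_ofReal x).symm,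
      conjTranspose_eq_transpose_of_trivial, hσ, Matrix.map_neg _ Complex.ofReal_neg, smul_neg,
      Complex.star_def, Complex.conj_I, neg_smul, neg_neg]
  have htr : (A + H)ᵀ = A - H := by
    rw [transpose_add, ← transpose_map, hΓ.eq, transpose_smul, ← transpose_map, hσ,
      Matrix.map_neg _ Complex.ofReal_neg, smul_neg, ← sub_eq_add_neg]
  have h₂ : (A - H).PosSemidef := htr ▸ h.transpose
  have hdetA : A.det = Γ.det := (RingHom.map_det Complex.ofRealHom Γ).symm
  have hΓdet : 0 ≤ Γ.det := by
    simpa [hdetA] using (posSemidef_of_posSemidef_add_of_posSemidef_sub h h₂).det_nonneg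
  have hdetσ : (σ.map Complex.ofReal).det = σ.det := (RingHom.map_det Complex.ofRealHom σ).symm
  have hdetH : ‖H.det‖ = |σ.det| := by
    rw [det_smul, norm_mul, norm_pow, Complex.norm_I, one_pow, one_mul, hdetσ, Complex.norm_real,
      Real.norm_eq_abs]
  calc |σ.det| = ‖H.det‖ := hdetH.symm
    _ ≤ ‖A.det‖ := norm_det_le_norm_det_of_posSemidef_add_of_posSemidef_sub hH h h₂
    _ = Γ.det := by rw [hdetA, Complex.norm_real, Real.norm_of_nonneg hΓdet]

lemma det_eq_sq_mul_sq_of_charpoly_eq {R : Type*} [CommRing R] [Nontrivial R] {M : Matrix n n R}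
    {a b : R} (h : M.charpoly = (X - C a) ^ 2 * (X - C b) ^ 2) : M.det = (a * b) ^ 2 := by
  have hcard : Fintype.card n = 4 := by
    rw [← M.charpoly_natDegree_eq_dim, h, ((monic_X_sub_C a).pow 2).natDegree_mul
      ((monic_X_sub_C b).pow 2), (monic_X_sub_C a).natDegree_pow, (monic_X_sub_C b).natDegree_pow,
      natDegree_X_sub_C, natDegree_X_sub_C]
  rw [det_eq_sign_charpoly_coeff, hcard, h, coeff_zero_eq_eval_zero]
  simp only [eval_mul, eval_pow, eval_sub, eval_X, eval_C]
  ring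

end Matrix

/-- For a 4×4 two-mode covariance matrix `Γ` (real symmetric, `Γ + iσ ≥ 0`),
the symplectic eigenvalues `s1, s2` of the partial transpose `Γ̃ = (I⊕E)Γ(I⊕E)` (each
a doubly degenerate square root of the eigenvalues of `−(Γ̃σ)²`, encoded via the
characteristic polynomial) satisfy `(s1 s2)² = det Γ ≥ 1`; hence not both `s1, s2` can be
less than 1. -/
theorem two_mode_partial_transpose_symplectic_product
    (σ : Matrix (Fin 2 ⊕ Fin 2) (Fin 2 ⊕ Fin 2) ℝ)
    (hσ : σ = Matrix.fromBlocks 0 1 (-1) 0)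
    (E : Matrix (Fin 2) (Fin 2) ℝ) (hE : E = Matrix.diagonal ![1, -1])
    (Γ : Matrix (Fin 2 ⊕ Fin 2) (Fin 2 ⊕ Fin 2) ℝ)
    (hΓsymm : Γ.IsSymm)
    (hΓcov : (Γ.map Complex.ofReal + Complex.I • σ.map Complex.ofReal).PosSemidef)
    (Γt : Matrix (Fin 2 ⊕ Fin 2) (Fin 2 ⊕ Fin 2) ℝ)
    (hΓt : Γt = (Matrix.fromBlocks 1 0 0 E) * Γ * (Matrix.fromBlocks 1 0 0 E))
    (s1 s2 : ℝ) (hs1 : 0 ≤ s1) (hs2 : 0 ≤ s2)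
    (hchar : (-((Γt * σ) ^ 2)).charpoly =
      (X - C (s1 ^ 2)) ^ 2 * (X - C (s2 ^ 2)) ^ 2) :
    (s1 * s2) ^ 2 = Γ.det ∧ 1 ≤ Γ.det ∧ ¬(s1 < 1 ∧ s2 < 1) := by
  have hσJ : σ = -J (Fin 2) ℝ := by simp [hσ, J, fromBlocks_neg]
  have hdetσ : σ.det = 1 := hσJ ▸ SymplecticGroup.det_eq_one
    (SymplecticGroup.neg_mem (SymplecticGroup.J_mem _ _))
  have hdetE : (fromBlocks 1 0 0 E : Matrix (Fin 2 ⊕ Fin 2) (Fin 2 ⊕ Fin 2) ℝ).det = -1 := by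
    simp [hE, det_fromBlocks_zero₂₁]
  have hdet_one_le : 1 ≤ Γ.det := by
    simpa [hdetσ] using abs_det_le_det_of_posSemidef_add_I_smul hΓsymm
      (by rw [hσJ, transpose_neg, J_transpose]) hΓcov
  have hdet_sq : ((s1 * s2) ^ 2) ^ 2 = Γ.det ^ 2 := by
    rw [mul_pow s1, ← det_eq_sq_mul_sq_of_charpoly_eq hchar, det_neg, det_pow, det_mul, hΓt]
    norm_num [det_mul, hdetE, hdetσ]
  have hprod : (s1 * s2) ^ 2 = Γ.det :=
    (pow_left_inj₀ (by positivity) (by linarith) two_ne_zero).1 hdet_sq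
  refine ⟨hprod, hdet_one_le, fun ⟨h1, h2⟩ ↦ ?_⟩
  have hprod_lt : s1 * s2 < 1 := mul_lt_one_of_nonneg_of_lt_one_left hs1 h1 h2.le
  nlinarith [mul_nonneg hs1 hs2]
end

section
/- A symmetric two-mode Gaussian state in Simon normal form, with covariance matrix Γ having blocks A = B = a I_2 (a ≥ 1) and C = diag(c, d), has the following properties: the eigenvalues of Γ are a ± c and a ± d, and the squared smallest symplectic eigenvalue of the partially transposed matrix equals (a − |c|)(a − |d|) when c·d ≤ 0; hence such states are already optimally entangled under passive transformations. -/
open Matrix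
open scoped ComplexOrder

private lemma det4 (M : Matrix (Fin 2 ⊕ Fin 2) (Fin 2 ⊕ Fin 2) ℝ) :
    M.det = Matrix.det !![M (.inl 0) (.inl 0), M (.inl 0) (.inl 1), M (.inl 0) (.inr 0), M (.inl 0) (.inr 1);
      M (.inl 1) (.inl 0), M (.inl 1) (.inl 1), M (.inl 1) (.inr 0), M (.inl 1) (.inr 1);
      M (.inr 0) (.inl 0), M (.inr 0) (.inl 1), M (.inr 0) (.inr 0), M (.inr 0) (.inr 1);
      M (.inr 1) (.inl 0), M (.inr 1) (.inl 1), M (.inr 1) (.inr 0), M (.inr 1) (.inr 1)] := by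
  rw [← Matrix.det_reindex_self finSumFinEquiv M]
  congr 1
  ext i j
  fin_cases i <;> fin_cases j <;> simp [Matrix.reindex_apply] <;> rfl

private lemma memspec (M : Matrix (Fin 2 ⊕ Fin 2) (Fin 2 ⊕ Fin 2) ℝ) (μ : ℝ) :
    μ ∈ spectrum ℝ M ↔ (algebraMap ℝ (Matrix (Fin 2 ⊕ Fin 2) (Fin 2 ⊕ Fin 2) ℝ) μ - M).det = 0 := by
  rw [spectrum.mem_iff, Matrix.isUnit_iff_isUnit_det, isUnit_iff_ne_zero, not_ne_iff]

/-- A symmetric two-mode Gaussian state in Simon normal form, with blocks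
`A = B = aI₂` (`a ≥ 1`) and `C = diag(c, d)` with `c·d ≤ 0`, has ordinary eigenvalues
`a ± c, a ± d`, and the squared smallest symplectic eigenvalue of its partial transpose
equals `(a − |c|)(a − |d|)`, the product of the two smallest ordinary eigenvalues; hence
such states are already optimally entangled under passive transformations. -/
theorem symmetric_simon_normal_form_optimally_entangled
    (a c d : ℝ) (ha : 1 ≤ a) (hcd : c * d ≤ 0)
    (σ1 : Matrix (Fin 2) (Fin 2) ℝ) (hσ1 : σ1 = !![0, 1; -1, 0])
    (σ : Matrix (Fin 2 ⊕ Fin 2) (Fin 2 ⊕ Fin 2) ℝ)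
    (hσ : σ = Matrix.fromBlocks σ1 0 0 σ1)
    (Γ : Matrix (Fin 2 ⊕ Fin 2) (Fin 2 ⊕ Fin 2) ℝ)
    (hΓ : Γ = Matrix.fromBlocks (a • 1) (Matrix.diagonal ![c, d])
      (Matrix.diagonal ![c, d]) (a • 1))
    (hΓcov : (Γ.map Complex.ofReal + Complex.I • σ.map Complex.ofReal).PosSemidef)
    (Γt : Matrix (Fin 2 ⊕ Fin 2) (Fin 2 ⊕ Fin 2) ℝ)
    (hΓt : Γt = (Matrix.fromBlocks 1 0 0 (Matrix.diagonal ![1, -1])) * Γ *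
      (Matrix.fromBlocks 1 0 0 (Matrix.diagonal ![1, -1]))) :
    spectrum ℝ Γ = {a + c, a - c, a + d, a - d} ∧
      (a - |c|) * (a - |d|) ∈ spectrum ℝ (-((Γt * σ) ^ 2)) ∧
      ∀ μ ∈ spectrum ℝ (-((Γt * σ) ^ 2)), (a - |c|) * (a - |d|) ≤ μ := by
  have hsA : ((2:Fin 4).succAbove (2 : Fin 3)) = 3 := by decide
  -- explicit form of Γ
  have hdiag : ∀ u v : ℝ, (Matrix.diagonal ![u, v] : Matrix (Fin 2) (Fin 2) ℝ) = !![u,0;0,v] := by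
    intro u v; ext i j; fin_cases i <;> fin_cases j <;> simp [Matrix.diagonal]
  have hsmul : ((a • 1) : Matrix (Fin 2) (Fin 2) ℝ) = !![a,0;0,a] := by
    ext i j; fin_cases i <;> fin_cases j <;> simp
  have hΓ' : Γ = Matrix.fromBlocks !![a,0;0,a] !![c,0;0,d] !![c,0;0,d] !![a,0;0,a] := by
    rw [hΓ, hdiag, hsmul]
  -- characteristic determinant of Γ
  have hdetΓ : ∀ μ : ℝ, (algebraMap ℝ (Matrix (Fin 2 ⊕ Fin 2) (Fin 2 ⊕ Fin 2) ℝ) μ - Γ).det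
      = (μ-(a+c))*(μ-(a-c))*(μ-(a+d))*(μ-(a-d)) := by
    intro μ
    rw [det4, hΓ']
    simp only [Matrix.sub_apply, Matrix.algebraMap_matrix_apply, Matrix.fromBlocks_apply₁₁,
      Matrix.fromBlocks_apply₁₂, Matrix.fromBlocks_apply₂₁, Matrix.fromBlocks_apply₂₂,
      reduceCtorEq, if_false, if_true, Sum.inl.injEq, Sum.inr.injEq]
    norm_num [Matrix.det_succ_row_zero, Fin.sum_univ_succ, hsA]
    simp only [Matrix.cons_val_two, Matrix.cons_val_three, Matrix.vecHead, Matrix.vecTail, Function.comp_apply, Fin.succ_zero_eq_one, Fin.succ_one_eq_two, Matrix.cons_val_zero, Matrix.cons_val_one]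
    ring
  have hspecΓ : spectrum ℝ Γ = ({a + c, a - c, a + d, a - d} : Set ℝ) := by
    ext μ
    rw [memspec, hdetΓ μ]
    simp only [Set.mem_insert_iff, Set.mem_singleton_iff, mul_eq_zero, sub_eq_zero]
    tauto
  -- explicit form of Γt
  have hΓt' : Γt = Matrix.fromBlocks !![a,0;0,a] !![c,0;0,-d] !![c,0;0,-d] !![a,0;0,a] := by
    rw [hΓt, hΓ', hdiag, Matrix.fromBlocks_multiply, Matrix.fromBlocks_multiply]
    norm_num [Matrix.mul_fin_two, Matrix.one_fin_two]
  -- the product Γt * σ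
  have hN : Γt * σ = Matrix.fromBlocks !![0,a;-a,0] !![0,c;d,0] !![0,c;d,0] !![0,a;-a,0] := by
    rw [hΓt', hσ, hσ1, Matrix.fromBlocks_multiply]
    norm_num [Matrix.mul_fin_two]
  -- the matrix  -(Γt σ)²
  have hM : -((Γt * σ) ^ 2) = Matrix.fromBlocks
      !![a^2-c*d,0;0,a^2-c*d] !![a*c-a*d,0;0,a*c-a*d]
      !![a*c-a*d,0;0,a*c-a*d] !![a^2-c*d,0;0,a^2-c*d] := by
    rw [pow_two, hN, Matrix.fromBlocks_multiply]
    ext i j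
    rcases i with i | i <;> rcases j with j | j <;> fin_cases i <;> fin_cases j <;>
      simp [Matrix.mul_fin_two] <;> ring
  have hdetM : ∀ μ : ℝ, (algebraMap ℝ (Matrix (Fin 2 ⊕ Fin 2) (Fin 2 ⊕ Fin 2) ℝ) μ
        - (-((Γt * σ) ^ 2))).det
      = ((μ-(a+c)*(a-d))*(μ-(a-c)*(a+d)))^2 := by
    intro μ
    rw [det4, hM]
    simp only [Matrix.sub_apply, Matrix.algebraMap_matrix_apply, Matrix.fromBlocks_apply₁₁,
      Matrix.fromBlocks_apply₁₂, Matrix.fromBlocks_apply₂₁, Matrix.fromBlocks_apply₂₂,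
      reduceCtorEq, if_false, if_true, Sum.inl.injEq, Sum.inr.injEq]
    norm_num [Matrix.det_succ_row_zero, Fin.sum_univ_succ, hsA]
    simp only [Matrix.cons_val_two, Matrix.cons_val_three, Matrix.vecHead, Matrix.vecTail, Function.comp_apply, Fin.succ_zero_eq_one, Fin.succ_one_eq_two, Matrix.cons_val_zero, Matrix.cons_val_one]
    ring
  have hspecM : ∀ μ : ℝ, μ ∈ spectrum ℝ (-((Γt * σ) ^ 2)) ↔
      μ = (a+c)*(a-d) ∨ μ = (a-c)*(a+d) := by
    intro μ
    rw [memspec, hdetM μ, pow_eq_zero_iff (two_ne_zero), mul_eq_zero, sub_eq_zero, sub_eq_zero]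
  -- arithmetic facts
  have ha0 : (0:ℝ) ≤ a := by linarith
  have habs : |c| * |d| = -(c * d) := by rw [← abs_mul, abs_of_nonpos hcd]
  have hmem : (a-|c|)*(a-|d|) = (a+c)*(a-d) ∨ (a-|c|)*(a-|d|) = (a-c)*(a+d) := by
    rcases abs_cases c with ⟨hc, hc0⟩ | ⟨hc, hc0⟩ <;> rcases abs_cases d with ⟨hd, hd0⟩ | ⟨hd, hd0⟩
    · have h0 : c * d = 0 := le_antisymm hcd (mul_nonneg hc0 hd0)
      rcases mul_eq_zero.mp h0 with h | h
      · left; rw [hc, hd, h]; ring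
      · right; rw [hc, hd, h]; ring
    · right; rw [hc, hd]; ring
    · left; rw [hc, hd]; ring
    · exfalso; nlinarith [mul_pos_of_neg_of_neg hc0 hd0]
  have hb1 : (a-|c|)*(a-|d|) ≤ (a+c)*(a-d) := by
    have h1 : 0 ≤ a * (c + |c|) := mul_nonneg ha0 (by linarith [neg_abs_le c])
    have h2 : 0 ≤ a * (|d| - d) := mul_nonneg ha0 (by linarith [le_abs_self d])
    nlinarith [habs, h1, h2]
  have hb2 : (a-|c|)*(a-|d|) ≤ (a-c)*(a+d) := by
    have h1 : 0 ≤ a * (|c| - c) := mul_nonneg ha0 (by linarith [le_abs_self c])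
    have h2 : 0 ≤ a * (d + |d|) := mul_nonneg ha0 (by linarith [neg_abs_le d])
    nlinarith [habs, h1, h2]
  refine ⟨hspecΓ, ?_, ?_⟩
  · rw [hspecM]; exact hmem
  · intro μ hμ
    rcases (hspecM μ).mp hμ with rfl | rfl
    · exact hb1
    · exact hb2
end
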